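/- arXiv:0807.4090 — 3 statements merged into one kernel-verified Lean document; each statement's English description precedes it below -/
import Mathlib

section
/- Let L_u be the matrix differential operator i·diag(1+√3, 1-√3)·d/dx + offdiag(u*, u) and B_u = -√3·I·d²/dx² + the matrix with diagonal entries (|u|²-1)/(√3+1), (|u|²-1)/(√3-1) and off-diagonal entries i u_x* (top right), -i u_x (bottom left). Then the commutator [L_u, B_u] equals the off-diagonal matrix with top-right entry -u_xx* + (|u|²-1)u* and bottom-left entry u_xx - (|u|²-1)u. Consequently, u solves the Gross–Pitaevskii equation i u_t + u_xx = (|u|²-1)u if and only if d/dt L_u = i[L_u, B_u]. -/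
open Complex

/-- The Lax operator `L_u` of the Gross–Pitaevskii equation, acting on
`ℂ²`-valued functions of `x`. -/
noncomputable def Lop (u : ℝ → ℂ) (v : ℝ → ℂ × ℂ) (x : ℝ) : ℂ × ℂ :=
  (Complex.I * (1 + (Real.sqrt 3 : ℂ)) * deriv (fun y => (v y).1) x
      + (starRingEnd ℂ) (u x) * (v x).2,
   Complex.I * (1 - (Real.sqrt 3 : ℂ)) * deriv (fun y => (v y).2) x
      + u x * (v x).1)

/-- The operator `B_u` of the Lax pair. -/
noncomputable def Bop (u : ℝ → ℂ) (v : ℝ → ℂ × ℂ) (x : ℝ) : ℂ × ℂ :=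
  (-(Real.sqrt 3 : ℂ) * deriv (deriv (fun y => (v y).1)) x
      + (((‖u x‖ ^ 2 - 1) / (Real.sqrt 3 + 1) : ℝ) : ℂ) * (v x).1
      + Complex.I * (starRingEnd ℂ) (deriv u x) * (v x).2,
   -(Real.sqrt 3 : ℂ) * deriv (deriv (fun y => (v y).2)) x
      + (((‖u x‖ ^ 2 - 1) / (Real.sqrt 3 - 1) : ℝ) : ℂ) * (v x).2
      - Complex.I * (deriv u x) * (v x).1)

lemma cast_abs_sq (z : ℂ) : ((‖z‖ : ℝ) : ℂ)^2 = z * (starRingEnd ℂ) z := by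
  rw [← Complex.ofReal_pow, Complex.sq_norm, Complex.mul_conj]

lemma key (w : ℝ → ℂ) (hw : ContDiff ℝ (⊤ : ℕ∞) w) (v : ℝ → ℂ × ℂ)
    (hv1 : ContDiff ℝ (⊤ : ℕ∞) (fun x => (v x).1)) (hv2 : ContDiff ℝ (⊤ : ℕ∞) (fun x => (v x).2)) (x : ℝ) :
    Lop w (Bop w v) x - Bop w (Lop w v) x =
      ((-(starRingEnd ℂ) (deriv (deriv w) x)
          + (((‖w x‖ ^ 2 - 1 : ℝ)) : ℂ) * (starRingEnd ℂ) (w x)) * (v x).2,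
       (deriv (deriv w) x - (((‖w x‖ ^ 2 - 1 : ℝ)) : ℂ) * w x) * (v x).1) := by
  have hP1 : ∀ (f : ℝ → ℂ) (y : ℝ),
      (((‖f y‖ ^ 2 - 1) / (Real.sqrt 3 + 1) : ℝ) : ℂ)
        = (f y * (starRingEnd ℂ) (f y) - 1) / ((Real.sqrt 3 : ℂ) + 1) := by
    intro f y; push_cast [cast_abs_sq]; ring
  have hP2 : ∀ (f : ℝ → ℂ) (y : ℝ),
      (((‖f y‖ ^ 2 - 1) / (Real.sqrt 3 - 1) : ℝ) : ℂ)
        = (f y * (starRingEnd ℂ) (f y) - 1) / ((Real.sqrt 3 : ℂ) - 1) := by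
    intro f y; push_cast [cast_abs_sq]; ring
  have hM : ∀ (f : ℝ → ℂ) (y : ℝ),
      (((‖f y‖ ^ 2 - 1 : ℝ)) : ℂ) = f y * (starRingEnd ℂ) (f y) - 1 := by
    intro f y; push_cast [cast_abs_sq]; ring
  -- differentiability
  have hwD : Differentiable ℝ w := (hw.of_le (m := 1) (by exact_mod_cast le_top)).differentiable (by exact one_ne_zero)
  have hw1 : ContDiff ℝ (⊤:ℕ∞) (deriv w) := (contDiff_infty_iff_deriv.mp (hw.of_le (by simp))).2
  have hwD1 : Differentiable ℝ (deriv w) := hw1.differentiable (by simp)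
  have h11 : ContDiff ℝ (⊤:ℕ∞) (deriv (fun x => (v x).1)) :=
    (contDiff_infty_iff_deriv.mp (hv1.of_le (by simp))).2
  have h12 : ContDiff ℝ (⊤:ℕ∞) (deriv (deriv (fun x => (v x).1))) :=
    (contDiff_infty_iff_deriv.mp h11).2
  have h21 : ContDiff ℝ (⊤:ℕ∞) (deriv (fun x => (v x).2)) :=
    (contDiff_infty_iff_deriv.mp (hv2.of_le (by simp))).2
  have h22 : ContDiff ℝ (⊤:ℕ∞) (deriv (deriv (fun x => (v x).2))) :=
    (contDiff_infty_iff_deriv.mp h21).2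
  -- HasDerivAt facts
  have Hw : ∀ y, HasDerivAt w (deriv w y) y := fun y => (hwD y).hasDerivAt
  have Hdw : ∀ y, HasDerivAt (deriv w) (deriv (deriv w) y) y := fun y => (hwD1 y).hasDerivAt
  have Hv1 : ∀ y, HasDerivAt (fun z => (v z).1) (deriv (fun z => (v z).1) y) y :=
    fun y => (((hv1.of_le (m := 1) (by exact_mod_cast le_top)).differentiable (by exact one_ne_zero)) y).hasDerivAt
  have Hdv1 : ∀ y, HasDerivAt (deriv (fun z => (v z).1)) (deriv (deriv (fun z => (v z).1)) y) y :=
    fun y => ((h11.differentiable (by simp)) y).hasDerivAt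
  have Hd2v1 : ∀ y, HasDerivAt (deriv (deriv (fun z => (v z).1)))
      (deriv (deriv (deriv (fun z => (v z).1))) y) y :=
    fun y => ((h12.differentiable (by simp)) y).hasDerivAt
  have Hv2 : ∀ y, HasDerivAt (fun z => (v z).2) (deriv (fun z => (v z).2) y) y :=
    fun y => (((hv2.of_le (m := 1) (by exact_mod_cast le_top)).differentiable (by exact one_ne_zero)) y).hasDerivAt
  have Hdv2 : ∀ y, HasDerivAt (deriv (fun z => (v z).2)) (deriv (deriv (fun z => (v z).2)) y) y :=
    fun y => ((h21.differentiable (by simp)) y).hasDerivAt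
  have Hd2v2 : ∀ y, HasDerivAt (deriv (deriv (fun z => (v z).2)))
      (deriv (deriv (deriv (fun z => (v z).2))) y) y :=
    fun y => ((h22.differentiable (by simp)) y).hasDerivAt
  have Hcw : ∀ y, HasDerivAt (fun z => (starRingEnd ℂ) (w z)) ((starRingEnd ℂ) (deriv w y)) y :=
    fun y => by simpa only [RCLike.star_def] using (Hw y).star
  have Hcdw : ∀ y, HasDerivAt (fun z => (starRingEnd ℂ) (deriv w z))
      ((starRingEnd ℂ) (deriv (deriv w) y)) y :=
    fun y => by simpa only [RCLike.star_def] using (Hdw y).star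
  -- deriv computations
  have e1 : deriv (fun y =>
        -(Real.sqrt 3 : ℂ) * deriv (deriv fun y => (v y).1) y
          + (w y * (starRingEnd ℂ) (w y) - 1) / ((Real.sqrt 3:ℂ) + 1) * (v y).1
          + Complex.I * (starRingEnd ℂ) (deriv w y) * (v y).2) x
      = -(Real.sqrt 3 : ℂ) * deriv (deriv (deriv fun y => (v y).1)) x
        + ((deriv w x * (starRingEnd ℂ) (w x) + w x * (starRingEnd ℂ) (deriv w x))
            / ((Real.sqrt 3:ℂ) + 1) * (v x).1
          + (w x * (starRingEnd ℂ) (w x) - 1) / ((Real.sqrt 3:ℂ) + 1) * deriv (fun y => (v y).1) x)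
        + (Complex.I * (starRingEnd ℂ) (deriv (deriv w) x) * (v x).2
          + Complex.I * (starRingEnd ℂ) (deriv w x) * deriv (fun y => (v y).2) x) := by
    have h := ((((Hd2v1 x).const_mul (-(Real.sqrt 3:ℂ))).add
        (((((Hw x).mul (Hcw x)).sub_const 1).div_const ((Real.sqrt 3:ℂ)+1)).mul (Hv1 x))).add
        (((Hcdw x).const_mul Complex.I).mul (Hv2 x))).deriv
    exact h.trans (by simp only [Pi.mul_apply])
  have E1 : deriv (fun y => Complex.I * (1 + (Real.sqrt 3:ℂ)) * deriv (fun y => (v y).1) y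
        + (starRingEnd ℂ) (w y) * (v y).2)
      = fun y => Complex.I * (1 + (Real.sqrt 3:ℂ)) * deriv (deriv fun y => (v y).1) y
        + ((starRingEnd ℂ) (deriv w y) * (v y).2
          + (starRingEnd ℂ) (w y) * deriv (fun y => (v y).2) y) := by
    funext y
    have h := (((Hdv1 y).const_mul (Complex.I * (1 + (Real.sqrt 3:ℂ)))).add
        ((Hcw y).mul (Hv2 y))).deriv
    exact h.trans (by ring)
  have e2 : deriv (fun y => Complex.I * (1 + (Real.sqrt 3:ℂ)) * deriv (deriv fun y => (v y).1) y
        + ((starRingEnd ℂ) (deriv w y) * (v y).2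
          + (starRingEnd ℂ) (w y) * deriv (fun y => (v y).2) y)) x
      = Complex.I * (1 + (Real.sqrt 3:ℂ)) * deriv (deriv (deriv fun y => (v y).1)) x
        + (starRingEnd ℂ) (deriv (deriv w) x) * (v x).2
        + 2 * (starRingEnd ℂ) (deriv w x) * deriv (fun y => (v y).2) x
        + (starRingEnd ℂ) (w x) * deriv (deriv fun y => (v y).2) x := by
    have h := (((Hd2v1 x).const_mul (Complex.I * (1 + (Real.sqrt 3:ℂ)))).add
        (((Hcdw x).mul (Hv2 x)).add ((Hcw x).mul (Hdv2 x)))).deriv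
    exact h.trans (by ring)
  have e3 : deriv (fun y =>
        -(Real.sqrt 3 : ℂ) * deriv (deriv fun y => (v y).2) y
          + (w y * (starRingEnd ℂ) (w y) - 1) / ((Real.sqrt 3:ℂ) - 1) * (v y).2
          - Complex.I * deriv w y * (v y).1) x
      = -(Real.sqrt 3 : ℂ) * deriv (deriv (deriv fun y => (v y).2)) x
        + ((deriv w x * (starRingEnd ℂ) (w x) + w x * (starRingEnd ℂ) (deriv w x))
            / ((Real.sqrt 3:ℂ) - 1) * (v x).2
          + (w x * (starRingEnd ℂ) (w x) - 1) / ((Real.sqrt 3:ℂ) - 1) * deriv (fun y => (v y).2) x)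
        - (Complex.I * deriv (deriv w) x * (v x).1
          + Complex.I * deriv w x * deriv (fun y => (v y).1) x) := by
    have h := ((((Hd2v2 x).const_mul (-(Real.sqrt 3:ℂ))).add
        (((((Hw x).mul (Hcw x)).sub_const 1).div_const ((Real.sqrt 3:ℂ)-1)).mul (Hv2 x))).sub
        (((Hdw x).const_mul Complex.I).mul (Hv1 x))).deriv
    exact h.trans (by simp only [Pi.mul_apply])
  have E2 : deriv (fun y => Complex.I * (1 - (Real.sqrt 3:ℂ)) * deriv (fun y => (v y).2) y
        + w y * (v y).1)
      = fun y => Complex.I * (1 - (Real.sqrt 3:ℂ)) * deriv (deriv fun y => (v y).2) y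
        + (deriv w y * (v y).1 + w y * deriv (fun y => (v y).1) y) := by
    funext y
    have h := (((Hdv2 y).const_mul (Complex.I * (1 - (Real.sqrt 3:ℂ)))).add
        ((Hw y).mul (Hv1 y))).deriv
    exact h.trans (by ring)
  have e4 : deriv (fun y => Complex.I * (1 - (Real.sqrt 3:ℂ)) * deriv (deriv fun y => (v y).2) y
        + (deriv w y * (v y).1 + w y * deriv (fun y => (v y).1) y)) x
      = Complex.I * (1 - (Real.sqrt 3:ℂ)) * deriv (deriv (deriv fun y => (v y).2)) x
        + deriv (deriv w) x * (v x).1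
        + 2 * deriv w x * deriv (fun y => (v y).1) x
        + w x * deriv (deriv fun y => (v y).1) x := by
    have h := (((Hd2v2 x).const_mul (Complex.I * (1 - (Real.sqrt 3:ℂ)))).add
        (((Hdw x).mul (Hv1 x)).add ((Hw x).mul (Hdv1 x)))).deriv
    exact h.trans (by ring)
  have h3 : (Real.sqrt 3:ℂ) * (Real.sqrt 3:ℂ) = 3 := by
    rw [← Complex.ofReal_mul]; norm_num [Real.mul_self_sqrt]
  have hne1 : (Real.sqrt 3:ℂ) + 1 ≠ 0 := by
    intro h
    have h2 : ((Real.sqrt 3 + 1:ℝ):ℂ) = 0 := by push_cast; exact h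
    have : (Real.sqrt 3 + 1 : ℝ) = 0 := by exact_mod_cast h2
    nlinarith [Real.sqrt_nonneg 3]
  have hne2 : (Real.sqrt 3:ℂ) - 1 ≠ 0 := by
    intro h
    have h2 : ((Real.sqrt 3 - 1:ℝ):ℂ) = 0 := by push_cast; exact h
    have : (Real.sqrt 3 - 1 : ℝ) = 0 := by exact_mod_cast h2
    nlinarith [Real.sq_sqrt (by norm_num : (0:ℝ) ≤ 3), Real.sqrt_nonneg 3]
  have hI : Complex.I * Complex.I = (-1 : ℂ) := Complex.I_mul_I
  have d1 : ∀ z : ℂ, z / ((Real.sqrt 3:ℂ) + 1) = z * ((Real.sqrt 3:ℂ) - 1) / 2 := by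
    intro z; rw [div_eq_div_iff hne1 two_ne_zero]; linear_combination (-z) * h3
  have d2 : ∀ z : ℂ, z / ((Real.sqrt 3:ℂ) - 1) = z * ((Real.sqrt 3:ℂ) + 1) / 2 := by
    intro z; rw [div_eq_div_iff hne2 two_ne_zero]; linear_combination (-z) * h3
  simp only [Lop, Bop, hP1, hP2, hM, Prod.mk_sub_mk, Prod.mk.injEq]
  rw [E1, E2, e1, e2, e3, e4]
  simp only [d1, d2]
  constructor
  · linear_combination (Complex.I * (deriv w x * (starRingEnd ℂ) (w x)
      + w x * (starRingEnd ℂ) (deriv w x)) * (v x).1 / 2) * h3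
      + ((1 + (Real.sqrt 3:ℂ)) * (starRingEnd ℂ) (deriv (deriv w) x) * (v x).2
        + 2 * (Real.sqrt 3:ℂ) * (starRingEnd ℂ) (deriv w x) * deriv (fun y => (v y).2) x) * hI
  · linear_combination (-(Complex.I * (deriv w x * (starRingEnd ℂ) (w x)
      + w x * (starRingEnd ℂ) (deriv w x)) * (v x).2) / 2) * h3
      + (-(1 - (Real.sqrt 3:ℂ)) * deriv (deriv w) x * (v x).1
        + 2 * (Real.sqrt 3:ℂ) * deriv w x * deriv (fun y => (v y).1) x) * hI

/-- the commutator `[L_u, B_u]` is the off-diagonal matrix with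
top-right entry `-u_xx* + (|u|²-1)u*` and bottom-left entry `u_xx - (|u|²-1)u`;
consequently `u` solves Gross–Pitaevskii iff `d/dt L_u = i [L_u, B_u]`. -/
theorem lax_pair_gp (u : ℝ → ℝ → ℂ) (hu : ContDiff ℝ (⊤ : ℕ∞) (Function.uncurry u)) :
    (∀ t : ℝ, ∀ v : ℝ → ℂ × ℂ, ContDiff ℝ (⊤ : ℕ∞) (fun x => (v x).1) →
      ContDiff ℝ (⊤ : ℕ∞) (fun x => (v x).2) → ∀ x : ℝ,
      Lop (u t) (Bop (u t) v) x - Bop (u t) (Lop (u t) v) x =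
        ((-(starRingEnd ℂ) (deriv (deriv (u t)) x)
            + (((‖u t x‖ ^ 2 - 1 : ℝ)) : ℂ) * (starRingEnd ℂ) (u t x)) * (v x).2,
         (deriv (deriv (u t)) x
            - (((‖u t x‖ ^ 2 - 1 : ℝ)) : ℂ) * u t x) * (v x).1))
    ∧
    ((∀ t x : ℝ, Complex.I * deriv (fun s => u s x) t + deriv (deriv (u t)) x =
        (((‖u t x‖ ^ 2 - 1 : ℝ)) : ℂ) * u t x)
      ↔
     (∀ t : ℝ, ∀ v : ℝ → ℂ × ℂ, ContDiff ℝ (⊤ : ℕ∞) (fun x => (v x).1) →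
       ContDiff ℝ (⊤ : ℕ∞) (fun x => (v x).2) → ∀ x : ℝ,
       deriv (fun s => Lop (u s) v x) t =
         Complex.I • (Lop (u t) (Bop (u t) v) x - Bop (u t) (Lop (u t) v) x))) := by
  have hw : ∀ t, ContDiff ℝ (⊤ : ℕ∞) (u t) := fun t => hu.comp (contDiff_const.prodMk contDiff_id)
  have hI : Complex.I * Complex.I = (-1 : ℂ) := Complex.I_mul_I
  have Hpair : ∀ (t x : ℝ) (v : ℝ → ℂ × ℂ), HasDerivAt (fun s => Lop (u s) v x)
      ((starRingEnd ℂ) (deriv (fun s => u s x) t) * (v x).2,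
       deriv (fun s => u s x) t * (v x).1) t := by
    intro t x v
    have hut : ContDiff ℝ (⊤ : ℕ∞) (fun s => u s x) := hu.comp (contDiff_id.prodMk contDiff_const)
    have h1 : HasDerivAt (fun s => u s x) (deriv (fun s => u s x) t) t :=
      (((hut.of_le (m := 1) (by exact_mod_cast le_top)).differentiable (by exact one_ne_zero)) t).hasDerivAt
    have hc : HasDerivAt (fun s => (starRingEnd ℂ) (u s x))
        ((starRingEnd ℂ) (deriv (fun s => u s x) t)) t := by
      simpa only [RCLike.star_def] using h1.star
    exact ((hc.mul_const ((v x).2)).const_add _).prodMk ((h1.mul_const ((v x).1)).const_add _)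
  refine ⟨fun t v h1 h2 x => key (u t) (hw t) v h1 h2 x, ?_⟩
  constructor
  · intro hgp t v hv1 hv2 x
    rw [key (u t) (hw t) v hv1 hv2 x, (Hpair t x v).deriv]
    have h := hgp t x
    have h2 := congrArg (starRingEnd ℂ) h
    simp only [map_add, map_mul, Complex.conj_I, Complex.conj_ofReal] at h2
    simp only [Prod.smul_mk, smul_eq_mul, Prod.mk.injEq]
    constructor
    · linear_combination (Complex.I * (v x).2) * h2
        + ((starRingEnd ℂ) (deriv (fun s => u s x) t) * (v x).2) * hI
    · linear_combination (-(Complex.I) * (v x).1) * h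
        + (deriv (fun s => u s x) t * (v x).1) * hI
  · intro hlax t x
    have h := hlax t (fun _ => ((1:ℂ), (1:ℂ))) contDiff_const contDiff_const x
    rw [key (u t) (hw t) _ contDiff_const contDiff_const x,
        (Hpair t x (fun _ => ((1:ℂ), (1:ℂ)))).deriv] at h
    have h2 := congrArg Prod.snd h
    simp only [Prod.smul_mk, smul_eq_mul, Prod.mk.injEq, mul_one] at h2
    linear_combination Complex.I * h2
      + (deriv (deriv (u t)) x - (((‖u t x‖ ^ 2 - 1 : ℝ)) : ℂ) * u t x) * hI
end

section
/- The function v(s,r) = -i/(2√2(s+r)) solves, for all s > 0 and r ≥ 1, the integral equation v(s,r) = -i/(2√2(s+1)) - ∫_1^r ∫_s^∞ v(s',r') / ((s+r')(s'+r')) ds' dr'. -/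
/-!
With `c = -i/(2√2)` the integrand is `c / (s + r') · (s' + r')⁻²`, whose `s'`-integral over
`(s, ∞)` is `c / (s + r')²`; integrating that over `(1, r]` gives `c (1/(s+1) - 1/(s+r))`,
which is exactly the difference `v(s,1) - v(s,r)`. Both integrals are evaluated with the
antiderivative `-(x + a)⁻¹` of `(x + a)⁻²`.
-/

open MeasureTheory Set Filter Topology

section

variable {a b c : ℝ}

theorem hasDerivAt_neg_inv_add {x : ℝ} (h : x + c ≠ 0) :
    HasDerivAt (fun y => -(y + c)⁻¹) ((x + c) ^ 2)⁻¹ x := by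
  have := (((hasDerivAt_id' x).add_const c).inv h).neg
  rwa [neg_div, neg_neg, one_div] at this

theorem tendsto_neg_inv_add_atTop : Tendsto (fun y : ℝ => -(y + c)⁻¹) atTop (𝓝 0) := by
  simpa using (tendsto_inv_atTop_zero.comp (tendsto_atTop_add_const_right _ c tendsto_id)).neg

theorem hasDerivAt_neg_inv_add_of_mem_Ici (h : 0 < a + c) :
    ∀ x ∈ Ici a, HasDerivAt (fun y => -(y + c)⁻¹) ((x + c) ^ 2)⁻¹ x :=
  fun x hx => hasDerivAt_neg_inv_add (by linarith [mem_Ici.mp hx])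

theorem integrableOn_Ioi_inv_add_sq (h : 0 < a + c) :
    IntegrableOn (fun x => ((x + c) ^ 2)⁻¹) (Ioi a) :=
  integrableOn_Ioi_deriv_of_nonneg' (hasDerivAt_neg_inv_add_of_mem_Ici h)
    (fun _ _ => by positivity) tendsto_neg_inv_add_atTop

theorem integral_Ioi_inv_add_sq (h : 0 < a + c) :
    ∫ x in Ioi a, ((x + c) ^ 2)⁻¹ = (a + c)⁻¹ := by
  rw [integral_Ioi_of_hasDerivAt_of_nonneg' (hasDerivAt_neg_inv_add_of_mem_Ici h)
    (fun _ _ => by positivity) tendsto_neg_inv_add_atTop]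
  simp

theorem integral_Ioc_inv_add_sq (hab : a ≤ b) (h : 0 < a + c) :
    ∫ x in Ioc a b, ((x + c) ^ 2)⁻¹ = (a + c)⁻¹ - (b + c)⁻¹ := by
  rw [← intervalIntegral.integral_of_le hab,
    ← intervalIntegral.integral_Ioi_sub_Ioi (integrableOn_Ioi_inv_add_sq h) hab,
    integral_Ioi_inv_add_sq h, integral_Ioi_inv_add_sq (by linarith)]

end

/-- `v(s,r) = -i/(2√2(s+r))` solves the integral equation
`v(s,r) = -i/(2√2(s+1)) - ∫_1^r ∫_s^∞ v(s',r')/((s+r')(s'+r')) ds' dr'`. -/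
theorem integral_equation_solution :
    ∀ s : ℝ, 0 < s → ∀ r : ℝ, 1 ≤ r →
      -Complex.I / (2 * (Real.sqrt 2 : ℂ) * ((s : ℂ) + (r : ℂ)))
        = -Complex.I / (2 * (Real.sqrt 2 : ℂ) * ((s : ℂ) + 1))
          - ∫ r' in Set.Ioc (1 : ℝ) r, ∫ s' in Set.Ioi s,
              (-Complex.I / (2 * (Real.sqrt 2 : ℂ) * ((s' : ℂ) + (r' : ℂ))))
                / (((s : ℂ) + (r' : ℂ)) * ((s' : ℂ) + (r' : ℂ))) := by
  intro s hs r hr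
  set c : ℂ := -Complex.I / (2 * (Real.sqrt 2 : ℂ)) with hc
  have hsqrt2 : (Real.sqrt 2 : ℂ) ≠ 0 := by exact_mod_cast (by positivity : Real.sqrt 2 ≠ 0)
  have inner : ∀ r' ∈ Ioc (1 : ℝ) r,
      ∫ s' in Ioi s, (-Complex.I / (2 * (Real.sqrt 2 : ℂ) * ((s' : ℂ) + (r' : ℂ))))
          / (((s : ℂ) + (r' : ℂ)) * ((s' : ℂ) + (r' : ℂ)))
        = c * (((r' + s) ^ 2)⁻¹ : ℝ) := by
    intro r' hr'
    have hsr' : 0 < s + r' := by linarith [hr'.1]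
    have hsr'ℂ : (s : ℂ) + r' ≠ 0 := by exact_mod_cast hsr'.ne'
    calc _ = ∫ s' in Ioi s, c / (s + r') * (((s' + r') ^ 2)⁻¹ : ℝ) := by
            congr 1; ext s'; push_cast; rw [hc]; field_simp
      _ = c / (s + r') * ((s + r')⁻¹ : ℝ) := by
            rw [integral_const_mul, integral_complex_ofReal, integral_Ioi_inv_add_sq hsr']
      _ = c * (((r' + s) ^ 2)⁻¹ : ℝ) := by
            rw [add_comm r' s]; push_cast; field_simp
  have hs1 : (s : ℂ) + 1 ≠ 0 := by exact_mod_cast (by linarith : s + 1 ≠ 0)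
  have hsr : (s : ℂ) + r ≠ 0 := by exact_mod_cast (by linarith : s + r ≠ 0)
  rw [setIntegral_congr_fun measurableSet_Ioc inner, integral_const_mul, integral_complex_ofReal,
    integral_Ioc_inv_add_sq hr (by linarith), add_comm 1 s, add_comm r s, hc]
  push_cast
  field_simp
  ring
end

section
/- For μ₀ ∈ ℝ \ {0}, ν₀ > 0, λ₀ ∈ ℝ with λ₀² + ν₀² = 1/2, and x such that 1 - (2√2 ν₀/μ₀)e^{2ν₀x} ≠ 0, the pair Ψ₁₁(x,y) = ν₀ e^{ν₀(x-y)} / (1 - (2√2ν₀/μ₀)e^{2ν₀x}) and Ψ₁₂(x,y) = √2 ν₀(λ₀ - iν₀) e^{ν₀(x-y)} / (1 - (2√2ν₀/μ₀)e^{2ν₀x}) solves, for y ≥ x, the finite-rank Marchenko system: 2√2 Ψ₁₁(x,y) = -F₂(x+y) + ∫_x^∞ [Ψ₁₂(x,s)·√2(F₁(s+y) - iF₂'(s+y)) + Ψ₁₁(x,s)·F₂(s+y)] ds and 2√2 Ψ₁₂(x,y) = -√2(F₁(x+y) + iF₂'(x+y)) + ∫_x^∞ [Ψ₁₁(x,s)·√2(F₁(s+y)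 + iF₂'(s+y)) + Ψ₁₂(x,s)·F₂(s+y)] ds, where F₁(z) = μ₀λ₀ e^{-ν₀z} and F₂(z) = μ₀ e^{-ν₀z}. -/
open MeasureTheory

/-!
Since `Ψ₁₂ = √2 (λ₀ - iν₀) Ψ₁₁` and `√2 (F₁ ± iF₂') = √2 (λ₀ ∓ iν₀) F₂`, where the two factors
multiply to `2 (λ₀² + ν₀²) = 1`, both equations of the system collapse to the scalar equation
`2√2 ψ(y) = -F₂(x + y) + 2 ∫ₓ^∞ ψ(s) F₂(s + y) ds` for `ψ = Ψ₁₁(x, ·)`. Its kernel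
`F₂(s + y) = μ₀ e^{-ν₀ s} e^{-ν₀ y}` has rank one, so with the ansatz `ψ(s) = A e^{ν₀ (x - s)}`
the integral is elementary and the equation reduces to a linear equation for `A`.
-/

theorem hasDerivAt_const_mul_exp_mul (c a z : ℝ) :
    HasDerivAt (fun z => c * Real.exp (a * z)) (a * c * Real.exp (a * z)) z := by
  refine ((((hasDerivAt_id' z).const_mul a).exp).const_mul c).congr_deriv ?_
  ring

theorem integral_Ioi_exp_mul_exp {ν : ℝ} (hν : 0 < ν) (x y : ℝ) :
    ∫ s in Set.Ioi x, Real.exp (ν * (x - s)) * Real.exp (-ν * (s + y))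
      = Real.exp (-ν * (x + y)) / (2 * ν) := by
  have hfactor : ∀ s, Real.exp (ν * (x - s)) * Real.exp (-ν * (s + y))
      = Real.exp (ν * (x - y)) * Real.exp (-(2 * ν) * s) := by
    intro s; rw [← Real.exp_add, ← Real.exp_add]; ring_nf
  simp_rw [hfactor]
  rw [integral_const_mul, integral_exp_mul_Ioi (by linarith), neg_div_neg_eq, ← mul_div_assoc,
    ← Real.exp_add]
  ring_nf

theorem scalar_marchenko_exp_kernel {ν μ : ℝ} (hν : 0 < ν) (hμ : μ ≠ 0) (a x y : ℝ)
    (hd : 1 - a * ν / μ * Real.exp (2 * ν * x) ≠ 0) :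
    a * (ν * Real.exp (ν * (x - y)) / (1 - a * ν / μ * Real.exp (2 * ν * x)))
      = -(μ * Real.exp (-ν * (x + y)))
        + 2 * ∫ s in Set.Ioi x, ν * Real.exp (ν * (x - s))
            / (1 - a * ν / μ * Real.exp (2 * ν * x)) * (μ * Real.exp (-ν * (s + y))) := by
  set d := 1 - a * ν / μ * Real.exp (2 * ν * x)
  have hP : Real.exp (ν * (x - y)) = Real.exp (2 * ν * x) * Real.exp (-ν * (x + y)) := by
    rw [← Real.exp_add]; ring_nf
  have hintegrand : ∀ s, ν * Real.exp (ν * (x - s)) / d * (μ * Real.exp (-ν * (s + y)))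
      = ν * μ / d * (Real.exp (ν * (x - s)) * Real.exp (-ν * (s + y))) := fun s => by ring
  simp_rw [hintegrand]
  rw [integral_const_mul, integral_Ioi_exp_mul_exp hν, hP]
  field_simp
  simp only [d]
  field_simp
  ring

theorem marchenko_system_of_scalar {ψ₁ ψ₂ F G H : ℝ → ℂ} {κ c c' : ℂ} {x y : ℝ}
    (hψ : ∀ s, ψ₂ s = c * ψ₁ s) (hG : ∀ z, G z = c' * F z) (hH : ∀ z, H z = c * F z)
    (hcc' : c * c' = 1)
    (hscalar : κ * ψ₁ y = -F (x + y) + 2 * ∫ s in Set.Ioi x, ψ₁ s * F (s + y)) :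
    (κ * ψ₁ y = -F (x + y) + ∫ s in Set.Ioi x, (ψ₂ s * G (s + y) + ψ₁ s * F (s + y)))
      ∧ (κ * ψ₂ y = -H (x + y) + ∫ s in Set.Ioi x, (ψ₁ s * H (s + y) + ψ₂ s * F (s + y))) := by
  have hintegrand₁ : ∀ s, ψ₂ s * G (s + y) + ψ₁ s * F (s + y) = 2 * (ψ₁ s * F (s + y)) :=
    fun s => by rw [hψ, hG]; linear_combination ψ₁ s * F (s + y) * hcc'
  have hintegrand₂ : ∀ s, ψ₁ s * H (s + y) + ψ₂ s * F (s + y) = c * (2 * (ψ₁ s * F (s + y))) :=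
    fun s => by rw [hψ, hH]; ring
  simp_rw [hintegrand₁, hintegrand₂, integral_const_mul]
  refine ⟨hscalar, ?_⟩
  rw [hψ, hH]
  linear_combination c * hscalar

theorem sqrt_two_mul_sub_I_mul_sqrt_two_mul_add_I {l n : ℝ} (h : l ^ 2 + n ^ 2 = 1 / 2) :
    (Real.sqrt 2 : ℂ) * (l - Complex.I * n) * (Real.sqrt 2 * (l + Complex.I * n)) = 1 := by
  have hsqrt : ((Real.sqrt 2 : ℝ) : ℂ) ^ 2 = 2 := by exact_mod_cast Real.sq_sqrt zero_le_two
  have hC : (l : ℂ) ^ 2 + (n : ℂ) ^ 2 = 1 / 2 := by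
    rw [← Complex.ofReal_pow, ← Complex.ofReal_pow, ← Complex.ofReal_add, h]; norm_num
  linear_combination (l ^ 2 - Complex.I ^ 2 * n ^ 2 : ℂ) * hsqrt + 2 * hC - 2 * n ^ 2 * Complex.I_sq

/-- the explicit pair `Ψ₁₁, Ψ₁₂` solves the finite-rank Marchenko
system with kernels `F₁(z) = μ₀lam₀e^{-ν₀z}`, `F₂(z) = μ₀e^{-ν₀z}`. -/
theorem finite_rank_marchenko (μ₀ ν₀ lam₀ x : ℝ) (hμ : μ₀ ≠ 0) (hν : 0 < ν₀)
    (hrel : lam₀ ^ 2 + ν₀ ^ 2 = 1 / 2)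
    (hden : ∀ s : ℝ, x ≤ s → 1 - 2 * Real.sqrt 2 * ν₀ / μ₀ * Real.exp (2 * ν₀ * s) ≠ 0)
    (F₁ F₂ : ℝ → ℝ)
    (hF₁ : ∀ z : ℝ, F₁ z = μ₀ * lam₀ * Real.exp (-ν₀ * z))
    (hF₂ : ∀ z : ℝ, F₂ z = μ₀ * Real.exp (-ν₀ * z))
    (Ψ₁₁ Ψ₁₂ : ℝ → ℝ → ℂ)
    (hΨ₁₁ : ∀ x' y : ℝ, Ψ₁₁ x' y =
      ((ν₀ * Real.exp (ν₀ * (x' - y))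
        / (1 - 2 * Real.sqrt 2 * ν₀ / μ₀ * Real.exp (2 * ν₀ * x')) : ℝ) : ℂ))
    (hΨ₁₂ : ∀ x' y : ℝ, Ψ₁₂ x' y =
      (Real.sqrt 2 : ℂ) * (ν₀ : ℂ) * ((lam₀ : ℂ) - Complex.I * (ν₀ : ℂ))
        * (Real.exp (ν₀ * (x' - y)) : ℂ)
        / ((1 - 2 * Real.sqrt 2 * ν₀ / μ₀ * Real.exp (2 * ν₀ * x') : ℝ) : ℂ)) :
    ∀ y : ℝ, x ≤ y →
      (2 * (Real.sqrt 2 : ℂ) * Ψ₁₁ x y = -((F₂ (x + y) : ℝ) : ℂ)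
        + ∫ s in Set.Ioi x,
            (Ψ₁₂ x s * ((Real.sqrt 2 : ℂ)
                * (((F₁ (s + y) : ℝ) : ℂ) - Complex.I * ((deriv F₂ (s + y) : ℝ) : ℂ)))
              + Ψ₁₁ x s * ((F₂ (s + y) : ℝ) : ℂ)))
      ∧
      (2 * (Real.sqrt 2 : ℂ) * Ψ₁₂ x y
        = -((Real.sqrt 2 : ℂ)
            * (((F₁ (x + y) : ℝ) : ℂ) + Complex.I * ((deriv F₂ (x + y) : ℝ) : ℂ)))
        + ∫ s in Set.Ioi x,
            (Ψ₁₁ x s * ((Real.sqrt 2 : ℂ)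
                * (((F₁ (s + y) : ℝ) : ℂ) + Complex.I * ((deriv F₂ (s + y) : ℝ) : ℂ)))
              + Ψ₁₂ x s * ((F₂ (s + y) : ℝ) : ℂ))) := by
  intro y _
  have hF₂' : ∀ z, deriv F₂ z = -ν₀ * μ₀ * Real.exp (-ν₀ * z) := fun z => by
    rw [funext hF₂]; exact (hasDerivAt_const_mul_exp_mul μ₀ (-ν₀) z).deriv
  have hscalar : 2 * (Real.sqrt 2 : ℂ) * Ψ₁₁ x y
      = -((F₂ (x + y) : ℝ) : ℂ) + 2 * ∫ s in Set.Ioi x, Ψ₁₁ x s * ((F₂ (s + y) : ℝ) : ℂ) := by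
    have h := scalar_marchenko_exp_kernel hν hμ (2 * Real.sqrt 2) x y (hden x le_rfl)
    simp_rw [← hF₂] at h
    simp_rw [hΨ₁₁]
    exact_mod_cast h
  refine marchenko_system_of_scalar (ψ₁ := Ψ₁₁ x) (ψ₂ := Ψ₁₂ x) (F := fun z => (F₂ z : ℂ))
    (G := fun z => Real.sqrt 2 * ((F₁ z : ℂ) - Complex.I * ((deriv F₂ z : ℝ) : ℂ)))
    (H := fun z => Real.sqrt 2 * ((F₁ z : ℂ) + Complex.I * ((deriv F₂ z : ℝ) : ℂ)))
    (c := Real.sqrt 2 * (lam₀ - Complex.I * ν₀)) (fun s => ?_) (fun z => ?_) (fun z => ?_)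
    (sqrt_two_mul_sub_I_mul_sqrt_two_mul_add_I hrel) hscalar
  · rw [hΨ₁₁, hΨ₁₂]; push_cast [-Complex.ofReal_exp]; ring
  · rw [hF₁, hF₂, hF₂']; push_cast [-Complex.ofReal_exp]; ring
  · rw [hF₁, hF₂, hF₂']; push_cast [-Complex.ofReal_exp]; ring
end
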